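/- arXiv:2507.05243 — 5 statements merged into one kernel-verified Lean document; each statement's English description precedes it below -/
import Mathlib

section
/- Let (I, ≼) be a nonempty directed preorder, let h : I → [0, ∞] be any function with values in the extended nonnegative reals, and let c ∈ [0, ∞]. Suppose that for every i ∈ I one has c ≤ sup { h(j) : j ∈ I, i ≼ j }. Then there exists a sequence i : ℕ → I with i(n) ≼ i(n+1) for all n, such that c ≤ limsup_{n → ∞} h(i(n)). -/
/-!
Fix levels `u n ↑ c` with `u n < c`. Since every tail `{j | i ≤ j}` has supremum at least `c`,
each `i` lies below some `j` with `u n < h j`; choosing these successively gives a chain along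
which `h` eventually exceeds every level below `c`, so its limsup is at least `c`.
-/

open Filter Topology

theorem exists_seq_le_succ_of_forall_exists_le {I : Type*} [LE I] [Nonempty I]
    {P : ℕ → I → Prop} (hP : ∀ n i, ∃ j, i ≤ j ∧ P n j) :
    ∃ s : ℕ → I, (∀ n, s n ≤ s (n + 1)) ∧ ∀ n, P n (s (n + 1)) := by
  choose next hnext using hP
  let s : ℕ → I := fun n => Nat.rec (Classical.arbitrary I) next n
  exact ⟨s, fun n => (hnext n (s n)).1, fun n => (hnext n (s n)).2⟩

theorem Filter.le_limsup_of_tendsto_of_le_succ {α : Type*} [CompleteLinearOrder α]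
    [TopologicalSpace α] [OrderTopology α] {u f : ℕ → α} {c : α}
    (hu : Tendsto u atTop (𝓝 c)) (huf : ∀ n, u n ≤ f (n + 1)) : c ≤ limsup f atTop :=
  calc c = limsup u atTop := hu.limsup_eq.symm
    _ ≤ limsup (fun n => f (n + 1)) atTop := limsup_le_limsup (.of_forall huf)
    _ = limsup f atTop := limsup_nat_add f 1

theorem sequential_control_of_directed_sup_general
    (I : Type*) [Preorder I] [Nonempty I]
    (h : I → ENNReal) (c : ENNReal)
    (hc : ∀ i : I, c ≤ ⨆ j, ⨆ (_ : i ≤ j), h j) :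
    ∃ i : ℕ → I, (∀ n : ℕ, i n ≤ i (n + 1)) ∧
      c ≤ Filter.limsup (fun n => h (i n)) Filter.atTop := by
  rcases eq_bot_or_bot_lt c with rfl | hc_pos
  · exact ⟨fun _ => Classical.arbitrary I, fun _ => le_rfl, bot_le⟩
  obtain ⟨u, -, hu_lt, hu_tendsto⟩ := exists_seq_strictMono_tendsto' hc_pos
  have above_level : ∀ n i, ∃ j, i ≤ j ∧ u n < h j := fun n i =>
    lt_biSup_iff (s := Set.Ici i) |>.mp <| (hu_lt n).2.trans_le (hc i)
  obtain ⟨s, hs_mono, hs_above⟩ := exists_seq_le_succ_of_forall_exists_le above_level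
  exact ⟨s, hs_mono, le_limsup_of_tendsto_of_le_succ hu_tendsto fun n => (hs_above n).le⟩

/-- Let `(I, ≼)` be a nonempty directed preorder, `h : I → [0,∞]`, and
`c ∈ [0,∞]`.  If for every `i` one has `c ≤ sup { h j : i ≼ j }`, then there is an increasing
sequence `i : ℕ → I` with `c ≤ limsup_n h (i n)`. -/
theorem sequential_control_of_directed_sup
    (I : Type*) [Preorder I] [Nonempty I] [IsDirected I (· ≤ ·)]
    (h : I → ENNReal) (c : ENNReal)
    (hc : ∀ i : I, c ≤ ⨆ j, ⨆ (_ : i ≤ j), h j) :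
    ∃ i : ℕ → I, (∀ n : ℕ, i n ≤ i (n + 1)) ∧
      c ≤ Filter.limsup (fun n => h (i n)) Filter.atTop :=
  sequential_control_of_directed_sup_general I h c hc
end

section
/- Let n ≥ 1 and let A be an associative unital ℂ-algebra on which the standard polynomial of degree 2n vanishes identically, i.e. Σ_{σ ∈ Sym(2n)} sgn(σ) · a_{σ(1)} a_{σ(2)} ⋯ a_{σ(2n)} = 0 for all a₁, …, a_{2n} ∈ A. Then every simple (unital) A-module V that is finite-dimensional as a complex vector space satisfies dim_ℂ V ≤ n. -/
/-!
By Schur's lemma and the Jacobson density theorem (together: Burnside's theorem), `A` maps onto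
`End_ℂ V ≃ Mat_d(ℂ)` with `d = dim V`, so `Mat_d(ℂ)` satisfies the standard identity of degree
`2n`. If `d > n`, substitute the staircase of matrix units `E₀₀, E₀₁, E₁₁, E₁₂, …, E₍ₙ₋₁₎ₙ`.
A product of matrix units vanishes unless consecutive indices match, and for a permuted staircase
this forces the permutation to be increasing, hence the identity; so `S₂ₙ` evaluates to `E₀ₙ ≠ 0`.
-/

open Equiv Matrix

section Burnside

variable (k : Type*) {A V : Type*} [Field k] [IsAlgClosed k] [Ring A] [Algebra k A]
  [AddCommGroup V] [Module k V] [Module A V] [IsScalarTower k A V]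
  [IsSimpleModule A V] [FiniteDimensional k V]

theorem IsSimpleModule.lsmul_surjective_of_isAlgClosed :
    Function.Surjective (Algebra.lsmul k k V : A →ₐ[k] Module.End k V) := by
  have : Module.Finite (Module.End A V) V := .of_restrictScalars_finite k _ V
  intro f
  have hf (g : Module.End A V) (v : V) : f (g v) = g (f v) := by
    obtain ⟨c, rfl⟩ := (algebraMap_end_bijective_of_isAlgClosed k (A := A) (V := V)).2 g
    simp [Algebra.algebraMap_eq_smul_one]
  obtain ⟨a, ha⟩ := Module.Finite.toModuleEnd_moduleEnd_surjective (R := A) (M := V)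
    { toFun := f, map_add' := f.map_add, map_smul' := hf }
  exact ⟨a, LinearMap.ext fun v => congr($ha v)⟩

end Burnside

section StandardPolynomial

variable {A B : Type*} [Ring A] [Ring B] {m : ℕ}

def evalStandardPolynomial (m : ℕ) (a : Fin m → A) : A :=
  ∑ σ : Perm (Fin m), (Perm.sign σ : ℤ) • (List.ofFn fun i => a (σ i)).prod

theorem map_evalStandardPolynomial (f : A →+* B) (a : Fin m → A) :
    f (evalStandardPolynomial m a) = evalStandardPolynomial m (f ∘ a) := by
  simp only [evalStandardPolynomial, map_sum, map_zsmul, map_list_prod, List.map_ofFn]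
  rfl

theorem evalStandardPolynomial_eq_zero_of_surjective (f : A →+* B)
    (hf : Function.Surjective f) (hA : ∀ a : Fin m → A, evalStandardPolynomial m a = 0)
    (b : Fin m → B) : evalStandardPolynomial m b = 0 := by
  obtain ⟨a, rfl⟩ : ∃ a : Fin m → A, f ∘ a = b :=
    ⟨fun i => (hf (b i)).choose, funext fun i => (hf (b i)).choose_spec⟩
  rw [← map_evalStandardPolynomial, hA, map_zero]

end StandardPolynomial

namespace Matrix

variable {d : ℕ}

section MatrixUnits

variable {R : Type*} [Semiring R]

theorem list_prod_map_single_of_isChain (l : List (Fin d × Fin d)) (hl : l ≠ [])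
    (h : l.IsChain fun p q => p.2 = q.1) :
    (l.map fun p => single p.1 p.2 (1 : R)).prod = single (l.head hl).1 (l.getLast hl).2 1 := by
  induction l with
  | nil => exact absurd rfl hl
  | cons x l ih =>
    cases l with
    | nil => simp
    | cons y l =>
      obtain ⟨hxy, hchain⟩ := List.isChain_cons_cons.mp h
      rw [List.map_cons, List.prod_cons, ih (List.cons_ne_nil y l) hchain,
        List.getLast_cons (List.cons_ne_nil y l), List.head_cons, List.head_cons, hxy,
        single_mul_single_same, one_mul]

theorem list_prod_map_single_of_not_isChain (l : List (Fin d × Fin d))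
    (h : ¬ l.IsChain fun p q => p.2 = q.1) :
    (l.map fun p => single p.1 p.2 (1 : R)).prod = 0 := by
  induction l with
  | nil => exact absurd List.isChain_nil h
  | cons x l ih =>
    cases l with
    | nil => exact absurd (List.isChain_singleton x) h
    | cons y l =>
      rw [List.map_cons, List.prod_cons]
      by_cases hchain : (y :: l).IsChain fun p q => p.2 = q.1
      · have hxy : x.2 ≠ y.1 := fun hxy => h (List.isChain_cons_cons.mpr ⟨hxy, hchain⟩)
        rw [list_prod_map_single_of_isChain _ (List.cons_ne_nil y l) hchain, List.head_cons,
          single_mul_single_of_ne _ _ _ _ hxy]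
      · rw [ih hchain, mul_zero]

end MatrixUnits

def staircase {n : ℕ} (hnd : n < d) (i : Fin (2 * n)) : Fin d × Fin d :=
  (⟨i / 2, by omega⟩, ⟨(i + 1) / 2, by omega⟩)

theorem isChain_ofFn_staircase_comp_iff {n : ℕ} (hnd : n < d) (σ : Perm (Fin (2 * n))) :
    (List.ofFn (staircase hnd ∘ σ)).IsChain (fun p q => p.2 = q.1) ↔ σ = 1 := by
  constructor
  · intro h
    have hσ : (List.ofFn σ).IsChain (· < ·) := by
      refine List.isChain_ofFn.mpr fun i hi => ?_
      have hstep := congrArg Fin.val (List.isChain_ofFn.mp h i hi)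
      have hne : (σ ⟨i, by omega⟩ : ℕ) ≠ σ ⟨i + 1, hi⟩ :=
        fun heq => by simpa using σ.injective (Fin.ext heq)
      simp only [Function.comp_apply, staircase] at hstep
      exact Fin.lt_def.mpr (by omega)
    exact Equiv.ext fun i => congrFun (List.sortedLT_ofFn_iff.mp hσ.sortedLT).eq_id i
  · rintro rfl
    exact List.isChain_ofFn.mpr fun i hi => rfl

variable {R : Type*} [Ring R]

theorem evalStandardPolynomial_staircase {n : ℕ} (hn : 0 < n) (hnd : n < d) :
    evalStandardPolynomial (2 * n)
        (fun i => single (staircase hnd i).1 (staircase hnd i).2 (1 : R))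
      = single ⟨0, by omega⟩ ⟨n, hnd⟩ 1 := by
  have hprod (σ : Perm (Fin (2 * n))) :
      (List.ofFn fun i => single (staircase hnd (σ i)).1 (staircase hnd (σ i)).2 (1 : R))
        = (List.ofFn (staircase hnd ∘ σ)).map fun p => single p.1 p.2 1 := by
    rw [List.map_ofFn]
    rfl
  rw [evalStandardPolynomial, Finset.sum_eq_single_of_mem 1 (Finset.mem_univ _)]
  · have hne : List.ofFn (staircase hnd ∘ (1 : Perm (Fin (2 * n)))) ≠ [] := by
      simpa using hn.ne'
    rw [Perm.sign_one, Units.val_one, one_smul, hprod, list_prod_map_single_of_isChain _ hne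
      ((isChain_ofFn_staircase_comp_iff hnd 1).mpr rfl), List.head_ofFn, List.getLast_ofFn]
    congr 2 <;> simp only [Function.comp_apply, Perm.coe_one, id_eq, staircase, Fin.ext_iff]
    all_goals omega
  · intro σ _ hσ
    rw [hprod, list_prod_map_single_of_not_isChain _
      ((isChain_ofFn_staircase_comp_iff hnd σ).not.mpr hσ), smul_zero]

theorem exists_evalStandardPolynomial_ne_zero [Nontrivial R] {n : ℕ} (hnd : n < d) :
    ∃ a : Fin (2 * n) → Matrix (Fin d) (Fin d) R, evalStandardPolynomial (2 * n) a ≠ 0 := by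
  rcases Nat.eq_zero_or_pos n with rfl | hn
  · have : NeZero d := ⟨hnd.ne'⟩
    exact ⟨0, by simp [evalStandardPolynomial]⟩
  · refine ⟨fun i => single (staircase hnd i).1 (staircase hnd i).2 1, fun h => ?_⟩
    rw [evalStandardPolynomial_staircase hn hnd] at h
    simpa using congr($h ⟨0, by omega⟩ ⟨n, hnd⟩)

end Matrix

theorem simple_module_dim_le_of_standard_identity_general
    (n : ℕ) (A : Type*) [Ring A] [Algebra ℂ A]
    (hA : ∀ a : Fin (2 * n) → A,
      ∑ σ : Equiv.Perm (Fin (2 * n)),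
        (Equiv.Perm.sign σ : ℤ) • (List.ofFn fun i => a (σ i)).prod = 0)
    (V : Type*) [AddCommGroup V] [Module A V] [Module ℂ V] [IsScalarTower ℂ A V]
    (hV : IsSimpleModule A V) [FiniteDimensional ℂ V] :
    Module.finrank ℂ V ≤ n := by
  by_contra! hnd
  let toMatrix := LinearMap.toMatrixAlgEquiv (Module.finBasis ℂ V)
  have hsurj : Function.Surjective (toMatrix.toAlgHom.comp (Algebra.lsmul ℂ ℂ V : A →ₐ[ℂ] _)) :=
    toMatrix.surjective.comp (IsSimpleModule.lsmul_surjective_of_isAlgClosed ℂ)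
  obtain ⟨a, ha⟩ := Matrix.exists_evalStandardPolynomial_ne_zero (R := ℂ) hnd
  exact ha (evalStandardPolynomial_eq_zero_of_surjective _ hsurj hA a)

/-- Let `n ≥ 1` and let `A` be an associative unital `ℂ`-algebra on which the
standard polynomial of degree `2n` vanishes identically.  Then every simple `A`-module that is
finite-dimensional over `ℂ` has `ℂ`-dimension at most `n`. -/
theorem simple_module_dim_le_of_standard_identity
    (n : ℕ) (hn : 1 ≤ n) (A : Type*) [Ring A] [Algebra ℂ A]
    (hA : ∀ a : Fin (2 * n) → A,
      ∑ σ : Equiv.Perm (Fin (2 * n)),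
        (Equiv.Perm.sign σ : ℤ) • (List.ofFn fun i => a (σ i)).prod = 0)
    (V : Type*) [AddCommGroup V] [Module A V] [Module ℂ V] [IsScalarTower ℂ A V]
    (hV : IsSimpleModule A V) [FiniteDimensional ℂ V] :
    Module.finrank ℂ V ≤ n :=
  simple_module_dim_le_of_standard_identity_general n A hA V hV
end

section
/- Let S be a commutative unital ring whose additive group is torsion-free (this holds in particular when S = ℤ or S = ℤ_p, the p-adic integers), and let p be a prime. Then every element of finite order in the p-reduced Heisenberg group Hr_p(S) lies in the central subgroup K = {(0,0,[s]) : s ∈ S}. Consequently, every finite subgroup of Hr_p(S) is contained in K. -/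
/-- The Heisenberg group over a commutative unital ring `S`: the underlying set is
`S × S × S` with multiplication `(x,y,z)·(x',y',z') = (x+x', y+y', z+xy'+z')`. -/
@[ext]
structure Heis (S : Type*) [CommRing S] where
  x : S
  y : S
  z : S

namespace Heis

variable {S : Type*} [CommRing S]

instance : Mul (Heis S) := ⟨fun a b => ⟨a.x + b.x, a.y + b.y, a.z + a.x * b.y + b.z⟩⟩
instance : One (Heis S) := ⟨⟨0, 0, 0⟩⟩
instance : Inv (Heis S) := ⟨fun a => ⟨-a.x, -a.y, a.x * a.y - a.z⟩⟩

@[simp] lemma mul_x (a b : Heis S) : (a * b).x = a.x + b.x := rfl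
@[simp] lemma mul_y (a b : Heis S) : (a * b).y = a.y + b.y := rfl
@[simp] lemma mul_z (a b : Heis S) : (a * b).z = a.z + a.x * b.y + b.z := rfl
@[simp] lemma one_x : (1 : Heis S).x = 0 := rfl
@[simp] lemma one_y : (1 : Heis S).y = 0 := rfl
@[simp] lemma one_z : (1 : Heis S).z = 0 := rfl
@[simp] lemma inv_x (a : Heis S) : a⁻¹.x = -a.x := rfl
@[simp] lemma inv_y (a : Heis S) : a⁻¹.y = -a.y := rfl
@[simp] lemma inv_z (a : Heis S) : a⁻¹.z = a.x * a.y - a.z := rfl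

instance : Group (Heis S) where
  mul_assoc a b c := by ext <;> simp <;> ring
  one_mul a := by ext <;> simp
  mul_one a := by ext <;> simp
  inv_mul_cancel a := by ext <;> simp <;> ring

end Heis

/-- The central subgroup `{(0,0,ps) : s ∈ S}` of the Heisenberg group `H(S)`. -/
def pCenter (p : ℕ) (S : Type*) [CommRing S] : Subgroup (Heis S) where
  carrier := {a | a.x = 0 ∧ a.y = 0 ∧ ∃ s : S, a.z = p * s}
  mul_mem' := by
    rintro a b ⟨hax, hay, s, hs⟩ ⟨hbx, hby, t, ht⟩
    refine ⟨by rw [Heis.mul_x, hax, hbx, add_zero],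
      by rw [Heis.mul_y, hay, hby, add_zero], s + t, ?_⟩
    rw [Heis.mul_z, hs, ht, hax]; ring
  one_mem' := ⟨rfl, rfl, 0, by simp⟩
  inv_mem' := by
    rintro a ⟨hax, hay, s, hs⟩
    exact ⟨by rw [Heis.inv_x, hax, neg_zero], by rw [Heis.inv_y, hay, neg_zero],
      -s, by rw [Heis.inv_z, hax, hs]; ring⟩

instance pCenter.normal (p : ℕ) (S : Type*) [CommRing S] : (pCenter p S).Normal := by
  constructor
  intro n hn g
  obtain ⟨hx, hy, hz⟩ := hn
  have hgn : g * n * g⁻¹ = n := by ext <;> simp [hx, hy] <;> ring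
  rw [hgn]; exact ⟨hx, hy, hz⟩

/-- The `p`-reduced Heisenberg group over `S`: the quotient of `H(S)` by the central
subgroup `{(0,0,ps) : s ∈ S}`. -/
abbrev HrP (p : ℕ) (S : Type*) [CommRing S] : Type _ := Heis S ⧸ pCenter p S

/-- The subgroup `{(0,0,s) : s ∈ S}` of `H(S)`. -/
def zSubgroup (S : Type*) [CommRing S] : Subgroup (Heis S) where
  carrier := {a | a.x = 0 ∧ a.y = 0}
  mul_mem' := by
    rintro a b ⟨hax, hay⟩ ⟨hbx, hby⟩
    exact ⟨by rw [Heis.mul_x, hax, hbx, add_zero], by rw [Heis.mul_y, hay, hby, add_zero]⟩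
  one_mem' := ⟨rfl, rfl⟩
  inv_mem' := by
    rintro a ⟨hax, hay⟩
    exact ⟨by rw [Heis.inv_x, hax, neg_zero], by rw [Heis.inv_y, hay, neg_zero]⟩

/-- The subgroup `K = {(0,0,[s]) : s ∈ S}` of the `p`-reduced Heisenberg group `Hr_p(S)`. -/
def Ksub (p : ℕ) (S : Type*) [CommRing S] : Subgroup (HrP p S) :=
  (zSubgroup S).map (QuotientGroup.mk' (pCenter p S))

instance Ksub.normal (p : ℕ) (S : Type*) [CommRing S] : (Ksub p S).Normal := by
  constructor
  intro n hn g
  obtain ⟨a, ⟨hax, hay⟩, rfl⟩ := hn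
  obtain ⟨b, rfl⟩ := QuotientGroup.mk'_surjective (pCenter p S) g
  refine ⟨b * a * b⁻¹, ⟨?_, ?_⟩, by simp⟩
  · simp [hax]
  · simp [hay]

/-- Old Mathlib's `AddMonoid.IsTorsionFree` (removed since): no nonzero element has finite
additive order. -/
def AddMonoid.IsTorsionFree (G : Type*) [AddMonoid G] : Prop :=
  ∀ g : G, g ≠ 0 → ¬IsOfFinAddOrder g

/- A torsion element of `Hr_p(S)` lifts to some `a` with `a ^ n ∈ {(0,0,ps)}`. The first two
coordinates of `a ^ n` are `n • a.x` and `n • a.y`, so torsion-freeness of `S` forces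
`a.x = a.y = 0`, i.e. the class of `a` lies in `K`. -/

lemma AddMonoid.IsTorsionFree.eq_zero_of_nsmul_eq_zero {G : Type*} [AddMonoid G]
    (hG : AddMonoid.IsTorsionFree G) {n : ℕ} (hn : 0 < n) {g : G} (h : n • g = 0) : g = 0 := by
  by_contra hg
  exact hG g hg (isOfFinAddOrder_iff_nsmul_eq_zero.mpr ⟨n, hn, h⟩)

namespace Heis

variable {S : Type*} [CommRing S]

@[simp] lemma pow_x (a : Heis S) (n : ℕ) : (a ^ n).x = n • a.x := by
  induction n with
  | zero => rw [pow_zero, one_x, zero_nsmul]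
  | succ n ih => rw [pow_succ, mul_x, ih, succ_nsmul]

@[simp] lemma pow_y (a : Heis S) (n : ℕ) : (a ^ n).y = n • a.y := by
  induction n with
  | zero => rw [pow_zero, one_y, zero_nsmul]
  | succ n ih => rw [pow_succ, mul_y, ih, succ_nsmul]

end Heis

lemma pCenter_le_zSubgroup (p : ℕ) (S : Type*) [CommRing S] : pCenter p S ≤ zSubgroup S :=
  fun _ ⟨hx, hy, _⟩ => ⟨hx, hy⟩

lemma mem_zSubgroup_of_pow_mem {S : Type*} [CommRing S] (hS : AddMonoid.IsTorsionFree S)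
    {a : Heis S} {n : ℕ} (hn : 0 < n) (h : a ^ n ∈ zSubgroup S) : a ∈ zSubgroup S := by
  obtain ⟨hx, hy⟩ := h
  rw [Heis.pow_x] at hx
  rw [Heis.pow_y] at hy
  exact ⟨hS.eq_zero_of_nsmul_eq_zero hn hx, hS.eq_zero_of_nsmul_eq_zero hn hy⟩

lemma mem_Ksub_of_isOfFinOrder (p : ℕ) {S : Type*} [CommRing S]
    (hS : AddMonoid.IsTorsionFree S) {g : HrP p S} (hg : IsOfFinOrder g) : g ∈ Ksub p S := by
  obtain ⟨a, rfl⟩ := QuotientGroup.mk'_surjective (pCenter p S) g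
  obtain ⟨n, hn, han⟩ := hg.exists_pow_eq_one
  have ha_pow : a ^ n ∈ pCenter p S := by
    rwa [← QuotientGroup.eq_one_iff, QuotientGroup.mk_pow]
  exact ⟨a, mem_zSubgroup_of_pow_mem hS hn (pCenter_le_zSubgroup p S ha_pow), rfl⟩

lemma Subgroup.le_of_finite_of_forall_isOfFinOrder_mem {G : Type*} [Group G] {H F : Subgroup G}
    (hH : ∀ g : G, IsOfFinOrder g → g ∈ H) [Finite F] : F ≤ H :=
  fun g hg => hH g (F.subtype.isOfFinOrder (isOfFinOrder_of_finite (⟨g, hg⟩ : F)))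

theorem HrP_torsion_in_Ksub_general
    (p : ℕ) (S : Type*) [CommRing S]
    (hS : AddMonoid.IsTorsionFree S) :
    (∀ g : HrP p S, IsOfFinOrder g → g ∈ Ksub p S) ∧
      (∀ F : Subgroup (HrP p S), Finite F → F ≤ Ksub p S) :=
  ⟨fun _ => mem_Ksub_of_isOfFinOrder p hS,
    fun _ _ => Subgroup.le_of_finite_of_forall_isOfFinOrder_mem
      fun _ => mem_Ksub_of_isOfFinOrder p hS⟩

/-- If the additive group of `S` is torsion-free, then every element of finite
order of `Hr_p(S)` lies in the central subgroup `K = {(0,0,[s])}`; consequently every finite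
subgroup of `Hr_p(S)` is contained in `K`. -/
theorem HrP_torsion_in_Ksub
    (p : ℕ) (hp : p.Prime) (S : Type*) [CommRing S]
    (hS : AddMonoid.IsTorsionFree S) :
    (∀ g : HrP p S, IsOfFinOrder g → g ∈ Ksub p S) ∧
      (∀ F : Subgroup (HrP p S), Finite F → F ≤ Ksub p S) :=
  HrP_torsion_in_Ksub_general p S hS
end

section
/- Let p be a prime. Every simple module over the complex group algebra ℂ[Hr_p(ℤ)] of the p-reduced integer Heisenberg group that is finite-dimensional as a complex vector space has ℂ-dimension equal to either 1 or p. -/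
/-!
Write `a = (1,0,0)`, `b = (0,1,0)`, `c = (0,0,1)`; these generate `Hr_p(ℤ)`, `c = [a, b]` is
central with `c ^ p = 1`, and `b ^ p` is central. By Schur's lemma `c` acts on a simple module by
a `p`-th root of unity `ω` and `b ^ p` by a scalar. If `v` is an eigenvector of `a` with
eigenvalue `μ`, then `bⁱ v` is an eigenvector with eigenvalue `ωⁱ μ`, and the span of
`v, b v, …, bᵖ⁻¹ v` is stable under `a` and `b`, hence is the whole module. If `ω ≠ 1` these
eigenvalues are distinct, so the `bⁱ v` form a basis and the dimension is `p`. If `ω = 1`, then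
`a` acts as the scalar `μ`, so any eigenvector of `b` spans a submodule and the dimension is `1`.
-/

open Module MonoidAlgebra

namespace Module.End

variable {K V : Type*} [Field K] [AddCommGroup V] [Module K V]

theorem mem_invtSubmodule_of_mul_eq_one [FiniteDimensional K V] {f g : End K V} (hgf : g * f = 1)
    {W : Submodule K V} (hW : W ∈ f.invtSubmodule) : W ∈ g.invtSubmodule := by
  have hf : Function.Injective f := fun u w h => by
    simpa [← mul_apply, hgf] using congr_arg g h
  have hsurj : Function.Surjective (f.restrict hW) := LinearMap.injective_iff_surjective.mp
    fun u w h => Subtype.ext (hf (congr_arg Subtype.val h))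
  intro w hw
  obtain ⟨u, hu⟩ := hsurj ⟨w, hw⟩
  have hfu : f u = w := congr_arg Subtype.val hu
  have hgw : g w = u := by rw [← hfu, ← mul_apply, hgf, one_apply]
  exact (hgw ▸ u.2 : g w ∈ W)

theorem HasEigenvector.pow_apply_of_mul_eq_smul_mul {A B : End K V} {ω μ : K} {v : V}
    (hAB : A * B = ω • (B * A)) (hB : Function.Injective B) (hv : A.HasEigenvector μ v) (n : ℕ) :
    A.HasEigenvector (ω ^ n * μ) ((B ^ n) v) := by
  refine ⟨mem_eigenspace_iff.mpr ?_, ?_⟩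
  · induction n with
    | zero => simpa using hv.apply_eq_smul
    | succ n ih =>
      rw [pow_succ', mul_apply, ← mul_apply A, hAB, LinearMap.smul_apply, mul_apply, ih,
        map_smul, smul_smul, pow_succ']
      ring_nf
  · rw [coe_pow]
    exact fun h => hv.2 (hB.iterate n (h.trans (by simp)))

theorem span_mem_invtSubmodule_of_forall_apply_eq_smul {A : End K V} {s : Set V}
    (hs : ∀ x ∈ s, ∃ μ : K, A x = μ • x) : Submodule.span K s ∈ A.invtSubmodule := by
  rw [mem_invtSubmodule_iff_map_le, Submodule.map_span_le]
  intro x hx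
  obtain ⟨μ, hμ⟩ := hs x hx
  rw [hμ]
  exact Submodule.smul_mem _ μ (Submodule.subset_span hx)

theorem span_range_pow_apply_mem_invtSubmodule {B : End K V} {v : V} {p : ℕ} {β : K} (hp : 0 < p)
    (hBv : (B ^ p) v = β • v) :
    Submodule.span K (Set.range fun i : Fin p => (B ^ (i : ℕ)) v) ∈ B.invtSubmodule := by
  rw [mem_invtSubmodule_iff_map_le, Submodule.map_span_le]
  rintro _ ⟨i, rfl⟩
  rw [← mul_apply, ← pow_succ']
  rcases (show (i : ℕ) + 1 ≤ p from i.2).lt_or_eq with h | h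
  · exact Submodule.subset_span ⟨⟨i + 1, h⟩, rfl⟩
  · rw [h, hBv]
    exact Submodule.smul_mem _ β (Submodule.subset_span ⟨⟨0, hp⟩, by simp⟩)

end Module.End

theorem IsSimpleModule.exists_smul_eq_smul_of_mem_center (k : Type*) {A V : Type*} [Field k]
    [IsAlgClosed k] [Ring A] [Algebra k A] [AddCommGroup V] [Module k V] [Module A V]
    [IsScalarTower k A V] [IsSimpleModule A V] [FiniteDimensional k V] {z : A}
    (hz : z ∈ Set.center A) : ∃ μ : k, ∀ v : V, z • v = μ • v := by
  let f : V →ₗ[A] V :=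
    { toFun := (z • ·)
      map_add' := smul_add z
      map_smul' a v := by
        simp only [smul_smul, RingHom.id_apply, Semigroup.mem_center_iff.mp hz a] }
  obtain ⟨μ, hμ⟩ := (IsSimpleModule.algebraMap_end_bijective_of_isAlgClosed k (A := A) (V := V)).2 f
  exact ⟨μ, fun v => (LinearMap.congr_fun hμ v).symm⟩

theorem MonoidAlgebra.of_mem_center {k G : Type*} [CommSemiring k] [Group G] {c : G}
    (hc : c ∈ Subgroup.center G) : of k G c ∈ Set.center k[G] := by
  refine Semigroup.mem_center_iff.mpr fun x => ?_
  induction x using MonoidAlgebra.induction_on with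
  | of g => rw [← map_mul, ← map_mul, Subgroup.mem_center_iff.mp hc g]
  | add x y hx hy => rw [add_mul, mul_add, hx, hy]
  | smul r x hx => rw [smul_mul_assoc, mul_smul_comm, hx]

namespace Representation

variable {k G V : Type*} [Field k] [Group G] [AddCommGroup V] [Module k V]

theorem mem_invtSubmodule_of_closure_eq_top [FiniteDimensional k V] (ρ : Representation k G V)
    {S : Set G} (hS : Subgroup.closure S = ⊤) {W : Submodule k V}
    (hW : ∀ s ∈ S, W ∈ Module.End.invtSubmodule (ρ s)) : W ∈ ρ.invtSubmodule := by
  refine (mem_invtSubmodule ρ).mpr fun g => ?_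
  induction (hS ▸ Subgroup.mem_top g : g ∈ Subgroup.closure S) using Subgroup.closure_induction with
  | mem s hs => exact hW s hs
  | one => simp
  | mul g h _ _ hg hh => rw [map_mul]; exact Module.End.invtSubmodule.comp _ hg hh
  | inv g _ hg =>
    exact Module.End.mem_invtSubmodule_of_mul_eq_one (by rw [← map_mul, inv_mul_cancel, map_one]) hg

variable [Module k[G] V] [IsScalarTower k k[G] V] [IsSimpleModule k[G] V]

theorem eq_top_of_mem_invtSubmodule_ofModule' {W : Submodule k V}
    (hW : W ∈ (ofModule' (k := k) (G := G) V).invtSubmodule) (hne : W ≠ ⊥) : W = ⊤ := by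
  let W' : Submodule k[G] V :=
    { W with
      smul_mem' x w hw := by
        induction x using MonoidAlgebra.induction_on with
        | of g => exact (mem_invtSubmodule _).mp hW g hw
        | add x y hx hy => rw [add_smul]; exact W.add_mem hx hy
        | smul r x hx => rw [smul_assoc]; exact W.smul_mem r hx }
  have hW' : W'.restrictScalars k = W := rfl
  rw [← hW', Submodule.restrictScalars_eq_top_iff]
  refine (eq_bot_or_eq_top W').resolve_left fun h => hne ?_
  rw [← hW', h, Submodule.restrictScalars_bot]

variable [FiniteDimensional k V]

variable (k) in
theorem exists_ofModule'_eq_algebraMap_of_mem_center [IsAlgClosed k] {c : G}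
    (hc : c ∈ Subgroup.center G) :
    ∃ μ : k, ofModule' (k := k) (G := G) V c = algebraMap k (Module.End k V) μ := by
  obtain ⟨μ, hμ⟩ := IsSimpleModule.exists_smul_eq_smul_of_mem_center k (V := V)
    (of_mem_center (k := k) hc)
  exact ⟨μ, LinearMap.ext hμ⟩

variable {a b : G}

theorem eq_top_of_mem_invtSubmodule_pair (hgen : Subgroup.closure {a, b} = ⊤)
    {W : Submodule k V} (ha : W ∈ Module.End.invtSubmodule (ofModule' (k := k) V a))
    (hb : W ∈ Module.End.invtSubmodule (ofModule' (k := k) V b)) (hne : W ≠ ⊥) : W = ⊤ := by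
  refine eq_top_of_mem_invtSubmodule_ofModule' (mem_invtSubmodule_of_closure_eq_top _ hgen ?_) hne
  rintro s (rfl | rfl)
  exacts [ha, hb]

theorem finrank_eq_one_of_eigenspace_eq_top [IsAlgClosed k] (hgen : Subgroup.closure {a, b} = ⊤)
    {μ : k} (ha : Module.End.eigenspace (ofModule' (k := k) V a) μ = ⊤) : finrank k V = 1 := by
  have : Nontrivial V := IsSimpleModule.nontrivial k[G] V
  obtain ⟨ν, hν⟩ := Module.End.exists_eigenvalue (ofModule' (k := k) V b)
  obtain ⟨u, hu⟩ := hν.exists_hasEigenvector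
  have hspan : k ∙ u = ⊤ := by
    refine eq_top_of_mem_invtSubmodule_pair hgen ?_ ?_ ?_
    · exact Module.End.span_mem_invtSubmodule_of_forall_apply_eq_smul <| by
        simpa using ⟨μ, Module.End.mem_eigenspace_iff.mp (ha ▸ Submodule.mem_top)⟩
    · exact Module.End.span_mem_invtSubmodule_of_forall_apply_eq_smul <| by
        simpa using ⟨ν, hu.apply_eq_smul⟩
    · exact (Submodule.span_singleton_eq_bot.not).mpr hu.2
  rw [← finrank_top, ← hspan, finrank_span_singleton hu.2]

theorem finrank_eq_one_or_eq_of_closure_pair_eq_top [IsAlgClosed k] {p : ℕ} (hp : p.Prime) {c : G}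
    (hgen : Subgroup.closure {a, b} = ⊤) (hab : a * b = c * (b * a)) (hc : c ∈ Subgroup.center G)
    (hcp : c ^ p = 1) (hbp : b ^ p ∈ Subgroup.center G) :
    finrank k V = 1 ∨ finrank k V = p := by
  set ρ := ofModule' (k := k) (G := G) V
  have : Nontrivial V := IsSimpleModule.nontrivial k[G] V
  obtain ⟨ω, hω⟩ := exists_ofModule'_eq_algebraMap_of_mem_center k (V := V) hc
  obtain ⟨β, hβ⟩ := exists_ofModule'_eq_algebraMap_of_mem_center k (V := V) hbp
  have hωp : ω ^ p = 1 := (algebraMap k (Module.End k V)).injective <| by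
    rw [map_pow, ← hω, ← map_pow, hcp, map_one, map_one]
  have hρab : ρ a * ρ b = ω • (ρ b * ρ a) := by
    rw [← map_mul, hab, map_mul, hω, ← Algebra.smul_def, map_mul]
  obtain ⟨μ, hμ⟩ := Module.End.exists_eigenvalue (ρ a)
  obtain ⟨v, hv⟩ := hμ.exists_hasEigenvector
  have he (i : ℕ) := hv.pow_apply_of_mul_eq_smul_mul hρab (ρ.apply_bijective b).injective i
  have hW : Submodule.span k (Set.range fun i : Fin p => (ρ b ^ (i : ℕ)) v) = ⊤ := by
    refine eq_top_of_mem_invtSubmodule_pair hgen ?_ ?_ ?_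
    · exact Module.End.span_mem_invtSubmodule_of_forall_apply_eq_smul <| by
        simpa using fun i : Fin p => ⟨_, (he i).apply_eq_smul⟩
    · exact Module.End.span_range_pow_apply_mem_invtSubmodule hp.pos <| by
        rw [← map_pow, hβ, Module.algebraMap_end_apply]
    · exact Submodule.ne_bot_iff _ |>.mpr ⟨v, Submodule.subset_span ⟨⟨0, hp.pos⟩, by simp⟩, hv.2⟩
  rcases eq_or_ne ω 1 with rfl | hω1
  · refine .inl (finrank_eq_one_of_eigenspace_eq_top hgen (μ := μ) (eq_top_iff.mpr ?_))
    rw [← hW, Submodule.span_le]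
    rintro _ ⟨i, rfl⟩
    simpa using (he i).1
  · have : Fact p.Prime := ⟨hp⟩
    have hprim : IsPrimitiveRoot ω p := IsPrimitiveRoot.iff_orderOf.mpr (orderOf_eq_prime hωp hω1)
    have hμ0 : μ ≠ 0 := by
      rintro rfl
      exact hv.2 ((ρ.apply_bijective a).injective (by simpa using hv.apply_eq_smul))
    have hli := Module.End.eigenvectors_linearIndependent' (ρ a) (fun i : Fin p => ω ^ (i : ℕ) * μ)
      (fun i j h => Fin.ext (hprim.injOn_pow_mul hμ0 (by simp) (by simp) h)) _ fun i => he i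
    exact .inr (by rw [← finrank_top, ← hW, finrank_span_eq_card hli, Fintype.card_fin])

end Representation

namespace Heis

variable {S : Type*} [CommRing S]

theorem mk_x_zpow (x : S) (n : ℤ) : (⟨x, 0, 0⟩ : Heis S) ^ n = ⟨n * x, 0, 0⟩ := by
  induction n using Int.induction_on with
  | zero => ext <;> simp
  | succ n ih => rw [zpow_add_one, ih]; ext <;> simp; ring
  | pred n ih => rw [zpow_sub_one, ih]; ext <;> simp; ring

theorem mk_y_zpow (y : S) (n : ℤ) : (⟨0, y, 0⟩ : Heis S) ^ n = ⟨0, n * y, 0⟩ := by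
  induction n using Int.induction_on with
  | zero => ext <;> simp
  | succ n ih => rw [zpow_add_one, ih]; ext <;> simp; ring
  | pred n ih => rw [zpow_sub_one, ih]; ext <;> simp; ring

theorem mk_z_zpow (z : S) (n : ℤ) : (⟨0, 0, z⟩ : Heis S) ^ n = ⟨0, 0, n * z⟩ := by
  induction n using Int.induction_on with
  | zero => ext <;> simp
  | succ n ih => rw [zpow_add_one, ih]; ext <;> simp; ring
  | pred n ih => rw [zpow_sub_one, ih]; ext <;> simp; ring

theorem closure_mk_one_zero_zero_mk_zero_one_zero :
    Subgroup.closure {⟨1, 0, 0⟩, ⟨0, 1, 0⟩} = (⊤ : Subgroup (Heis ℤ)) := by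
  set H := Subgroup.closure {(⟨1, 0, 0⟩ : Heis ℤ), ⟨0, 1, 0⟩}
  have ha : (⟨1, 0, 0⟩ : Heis ℤ) ∈ H := Subgroup.subset_closure (by simp)
  have hb : (⟨0, 1, 0⟩ : Heis ℤ) ∈ H := Subgroup.subset_closure (by simp)
  have hc : (⟨0, 0, 1⟩ : Heis ℤ) = ⟨1, 0, 0⟩ * ⟨0, 1, 0⟩ * (⟨1, 0, 0⟩)⁻¹ * (⟨0, 1, 0⟩)⁻¹ := by
    ext <;> simp
  refine eq_top_iff.mpr fun g _ => ?_
  have hg : g = (⟨1, 0, 0⟩ : Heis ℤ) ^ g.x * (⟨0, 1, 0⟩ : Heis ℤ) ^ g.y *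
      (⟨0, 0, 1⟩ : Heis ℤ) ^ (g.z - g.x * g.y) := by
    rw [mk_x_zpow, mk_y_zpow, mk_z_zpow]; ext <;> simp
  rw [hg, hc]
  exact H.mul_mem (H.mul_mem (H.zpow_mem ha _) (H.zpow_mem hb _))
    (H.zpow_mem (H.mul_mem (H.mul_mem (H.mul_mem ha hb) (H.inv_mem ha)) (H.inv_mem hb)) _)

end Heis

theorem HrP.mk_mem_center_of_dvd {p : ℕ} {S : Type*} [CommRing S] {h : Heis S}
    (hx : (p : S) ∣ h.x) (hy : (p : S) ∣ h.y) : (h : HrP p S) ∈ Subgroup.center (HrP p S) := by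
  obtain ⟨s, hs⟩ := hx
  obtain ⟨t, ht⟩ := hy
  refine Subgroup.mem_center_iff.mpr fun g => ?_
  induction g using QuotientGroup.induction_on with
  | H g =>
    rw [← QuotientGroup.mk_mul, ← QuotientGroup.mk_mul, QuotientGroup.eq]
    -- `(g * h)⁻¹ * (h * g) = (0, 0, h.x * g.y - g.x * h.y)`
    refine ⟨by simp; ring, by simp; ring, s * g.y - g.x * t, ?_⟩
    simp [hs, ht]; ring

/-- Every finite-dimensional simple module over the complex group algebra of
the `p`-reduced integer Heisenberg group `Hr_p(ℤ)` has `ℂ`-dimension `1` or `p`. -/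
theorem HrP_int_irreducible_dim_one_or_p
    (p : ℕ) (hp : p.Prime)
    (V : Type*) [AddCommGroup V]
    [Module (MonoidAlgebra ℂ (HrP p ℤ)) V]
    [Module ℂ V] [IsScalarTower ℂ (MonoidAlgebra ℂ (HrP p ℤ)) V]
    (hsimple : IsSimpleModule (MonoidAlgebra ℂ (HrP p ℤ)) V)
    (hfd : FiniteDimensional ℂ V) :
    Module.finrank ℂ V = 1 ∨ Module.finrank ℂ V = p := by
  let π := QuotientGroup.mk' (pCenter p ℤ)
  have hgen : Subgroup.closure {π ⟨1, 0, 0⟩, π ⟨0, 1, 0⟩} = ⊤ := by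
    rw [← Set.image_pair, ← MonoidHom.map_closure, Heis.closure_mk_one_zero_zero_mk_zero_one_zero,
      Subgroup.map_top_of_surjective _ (QuotientGroup.mk'_surjective _)]
  refine Representation.finrank_eq_one_or_eq_of_closure_pair_eq_top hp (c := π ⟨0, 0, 1⟩) hgen
    ?_ (HrP.mk_mem_center_of_dvd (dvd_zero _) (dvd_zero _)) ?_ ?_
  · simp only [← map_mul]
    exact congrArg π (by ext <;> simp)
  · rw [← map_pow, ← zpow_natCast, Heis.mk_z_zpow]
    exact (QuotientGroup.eq_one_iff _).mpr ⟨rfl, rfl, 1, by simp⟩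
  · rw [← map_pow, ← zpow_natCast, Heis.mk_y_zpow]
    exact HrP.mk_mem_center_of_dvd (dvd_zero _) (by simp)
end

section
/- Let (I, ≤) be a directed partial order, and let (G_i)_{i ∈ I} be an inverse system of finite groups, each equipped with the discrete topology, with transition homomorphisms q_{ij} : G_j → G_i for i ≤ j satisfying q_{ii} = id and q_{ij} ∘ q_{jk} = q_{ik} for i ≤ j ≤ k. Let G = { x ∈ ∏_{i ∈ I} G_i : q_{ij}(x_j) = x_i for all i ≤ j }, a closed subgroup of the product with the subspace topology, and let Q_i : G → G_i denote the i-th coordinate projection. Then the set ⋃_{i ∈ I} { f ∘ Q_i : f a function G_i → ℂ } is a subalgebra of the algebra C(G, ℂ) of continuous complex-valued functions on G, closed under complex conjugation, and it is dense in C(G, ℂ) with respect to the supremum norm. -/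
/-!
By directedness, any two cylinder functions factor through a common level `G_k`, so they are
closed under the ring operations; conjugation acts on `f` directly. The indicator of a point of
`G_i`, pulled back along `Q_i`, separates any two points of `G` that differ in coordinate `i`.
Finally `G` is compact, being closed in the product of the finite spaces `G_i`, so the complex
Stone–Weierstrass theorem gives density.
-/

open Set

section Cylinder

variable {G ι : Type*} [TopologicalSpace G] {X : ι → Type*} (π : ∀ i, G → X i)

def cylinderFunctions (R : Type*) [TopologicalSpace R] : Set C(G, R) :=
  {F | ∃ (i : ι) (f : X i → R), ∀ x, F x = f (π i x)}

variable {π} {R : Type*} [TopologicalSpace R]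

theorem mem_cylinderFunctions_of_map (g : R → R) {F₁ F : C(G, R)}
    (h₁ : F₁ ∈ cylinderFunctions π R) (hF : ∀ x, F x = g (F₁ x)) :
    F ∈ cylinderFunctions π R := by
  obtain ⟨i, f, hf⟩ := h₁
  exact ⟨i, g ∘ f, fun x => by simp [hF, hf]⟩

theorem mem_cylinderFunctions_of_map₂ [Preorder ι] [IsDirected ι (· ≤ ·)]
    (q : ∀ i j : ι, i ≤ j → X j → X i) (hπ : ∀ i j h x, q i j h (π j x) = π i x)
    (op : R → R → R) {F₁ F₂ F : C(G, R)}
    (h₁ : F₁ ∈ cylinderFunctions π R) (h₂ : F₂ ∈ cylinderFunctions π R)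
    (hF : ∀ x, F x = op (F₁ x) (F₂ x)) :
    F ∈ cylinderFunctions π R := by
  obtain ⟨i, f₁, hf₁⟩ := h₁
  obtain ⟨j, f₂, hf₂⟩ := h₂
  obtain ⟨k, hik, hjk⟩ := directed_of (· ≤ ·) i j
  exact ⟨k, fun z => op (f₁ (q i k hik z)) (f₂ (q j k hjk z)),
    fun x => by simp [hF, hf₁, hf₂, hπ]⟩

variable (π) in
def cylinderSubalgebra [CommSemiring R] [IsTopologicalSemiring R] [Nonempty ι] [Preorder ι]
    [IsDirected ι (· ≤ ·)] (q : ∀ i j : ι, i ≤ j → X j → X i)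
    (hπ : ∀ i j h x, q i j h (π j x) = π i x) : Subalgebra R C(G, R) where
  carrier := cylinderFunctions π R
  mul_mem' h₁ h₂ := mem_cylinderFunctions_of_map₂ q hπ (· * ·) h₁ h₂ fun _ => rfl
  add_mem' h₁ h₂ := mem_cylinderFunctions_of_map₂ q hπ (· + ·) h₁ h₂ fun _ => rfl
  algebraMap_mem' r := ⟨Classical.arbitrary ι, fun _ => r, fun _ => rfl⟩

theorem star_mem_cylinderFunctions [Star R] [ContinuousStar R] {F : C(G, R)}
    (hF : F ∈ cylinderFunctions π R) : star F ∈ cylinderFunctions π R :=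
  mem_cylinderFunctions_of_map star hF fun _ => rfl

theorem cylinderSubalgebra_separatesPoints [CommSemiring R] [IsTopologicalSemiring R]
    [Nontrivial R] [Nonempty ι] [Preorder ι] [IsDirected ι (· ≤ ·)]
    [∀ i, TopologicalSpace (X i)] [∀ i, DiscreteTopology (X i)]
    (hπc : ∀ i, Continuous (π i)) (hinj : ∀ x y, (∀ i, π i x = π i y) → x = y)
    (q : ∀ i j : ι, i ≤ j → X j → X i) (hπ : ∀ i j h x, q i j h (π j x) = π i x) :
    (cylinderSubalgebra π q hπ : Subalgebra R C(G, R)).SeparatesPoints := by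
  classical
  intro x y hxy
  obtain ⟨i, hi⟩ : ∃ i, π i x ≠ π i y := by
    by_contra! h
    exact hxy (hinj x y h)
  let f : X i → R := Pi.single (π i x) 1
  let F : C(G, R) := ⟨f ∘ π i, continuous_of_discreteTopology.comp (hπc i)⟩
  refine ⟨F, ⟨F, ⟨i, f, fun _ => rfl⟩, rfl⟩, ?_⟩
  simp [F, f, hi.symm]

theorem dense_cylinderFunctions {𝕜 : Type*} [RCLike 𝕜] [CompactSpace G] [Nonempty ι]
    [Preorder ι] [IsDirected ι (· ≤ ·)]
    [∀ i, TopologicalSpace (X i)] [∀ i, DiscreteTopology (X i)]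
    (hπc : ∀ i, Continuous (π i)) (hinj : ∀ x y, (∀ i, π i x = π i y) → x = y)
    (q : ∀ i j : ι, i ≤ j → X j → X i) (hπ : ∀ i j h x, q i j h (π j x) = π i x) :
    Dense (cylinderFunctions π 𝕜) := by
  let A : StarSubalgebra 𝕜 C(G, 𝕜) :=
    { cylinderSubalgebra π q hπ with star_mem' := star_mem_cylinderFunctions }
  have hA := ContinuousMap.starSubalgebra_topologicalClosure_eq_top_of_separatesPoints A
    (cylinderSubalgebra_separatesPoints hπc hinj q hπ)
  change Dense (A : Set C(G, 𝕜))
  rw [dense_iff_closure_eq, ← StarSubalgebra.topologicalClosure_coe, hA, StarSubalgebra.coe_top]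

end Cylinder

section InverseLimit

variable {ι : Type*} [Preorder ι] {X : ι → Type*} [∀ i, TopologicalSpace (X i)]

theorem isClosed_setOf_compatible [∀ i, T2Space (X i)] (q : ∀ i j : ι, i ≤ j → X j → X i)
    (hq : ∀ i j h, Continuous (q i j h)) :
    IsClosed {x : ∀ i, X i | ∀ i j h, q i j h (x j) = x i} := by
  simp only [ofPred_forall]
  exact isClosed_iInter fun i => isClosed_iInter fun j => isClosed_iInter fun h =>
    isClosed_eq ((hq i j h).comp (continuous_apply j)) (continuous_apply i)

theorem compactSpace_subtype_compatible [∀ i, T2Space (X i)] [∀ i, CompactSpace (X i)]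
    (q : ∀ i j : ι, i ≤ j → X j → X i) (hq : ∀ i j h, Continuous (q i j h)) :
    CompactSpace {x : ∀ i, X i // ∀ i j h, q i j h (x j) = x i} :=
  isCompact_iff_compactSpace.mp (isClosed_setOf_compatible q hq).isCompact

end InverseLimit

theorem inverse_limit_cylinder_functions_dense_general
    (I : Type*) [PartialOrder I] [Nonempty I] [IsDirected I (· ≤ ·)]
    (Gi : I → Type*) [∀ i, Group (Gi i)] [∀ i, Finite (Gi i)]
    [∀ i, TopologicalSpace (Gi i)] [∀ i, DiscreteTopology (Gi i)]
    (q : ∀ i j : I, i ≤ j → (Gi j →* Gi i))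
    (𝒜 : Set C({x : ∀ i, Gi i // ∀ (i j : I) (h : i ≤ j), q i j h (x j) = x i}, ℂ))
    (h𝒜 : 𝒜 = {F | ∃ (i : I) (f : Gi i → ℂ), ∀ x, F x = f (x.val i)}) :
    (∃ A : Subalgebra ℂ
        C({x : ∀ i, Gi i // ∀ (i j : I) (h : i ≤ j), q i j h (x j) = x i}, ℂ),
      (A : Set _) = 𝒜) ∧
      (∀ F ∈ 𝒜, star F ∈ 𝒜) ∧
      Dense 𝒜 := by
  subst h𝒜
  have hπ : ∀ i j h (x : {x : ∀ i, Gi i // ∀ i j h, q i j h (x j) = x i}),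
      q i j h (x.val j) = x.val i := fun i j h x => x.prop i j h
  have := compactSpace_subtype_compatible (fun i j h => q i j h) fun _ _ _ =>
    continuous_of_discreteTopology
  exact ⟨⟨cylinderSubalgebra _ _ hπ, rfl⟩, fun _ => star_mem_cylinderFunctions,
    dense_cylinderFunctions (fun i => (continuous_apply i).comp continuous_subtype_val)
      (fun _ _ h => Subtype.ext (funext h)) _ hπ⟩

/-- Let `G = varprojlim G_i` be the inverse limit of an inverse system of
finite discrete groups over a directed index set, realized inside the product `∏ i, G_i` with
the subspace topology, with coordinate projections `Q_i`.  Then the set of continuous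
functions on `G` of the form `f ∘ Q_i` is a subalgebra of `C(G, ℂ)` closed under complex
conjugation, and it is dense in `C(G, ℂ)` with respect to the supremum norm (the compact-open
topology on the compact space `G`). -/
theorem inverse_limit_cylinder_functions_dense
    (I : Type*) [PartialOrder I] [Nonempty I] [IsDirected I (· ≤ ·)]
    (Gi : I → Type*) [∀ i, Group (Gi i)] [∀ i, Finite (Gi i)]
    [∀ i, TopologicalSpace (Gi i)] [∀ i, DiscreteTopology (Gi i)]
    (q : ∀ i j : I, i ≤ j → (Gi j →* Gi i))
    (hq_id : ∀ (i : I) (h : i ≤ i), q i i h = MonoidHom.id (Gi i))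
    (hq_comp : ∀ (i j k : I) (hij : i ≤ j) (hjk : j ≤ k),
      (q i j hij).comp (q j k hjk) = q i k (hij.trans hjk))
    (𝒜 : Set C({x : ∀ i, Gi i // ∀ (i j : I) (h : i ≤ j), q i j h (x j) = x i}, ℂ))
    (h𝒜 : 𝒜 = {F | ∃ (i : I) (f : Gi i → ℂ), ∀ x, F x = f (x.val i)}) :
    (∃ A : Subalgebra ℂ
        C({x : ∀ i, Gi i // ∀ (i j : I) (h : i ≤ j), q i j h (x j) = x i}, ℂ),
      (A : Set _) = 𝒜) ∧
      (∀ F ∈ 𝒜, star F ∈ 𝒜) ∧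
      Dense 𝒜 :=
  inverse_limit_cylinder_functions_dense_general I Gi q 𝒜 h𝒜
end
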